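/- Let \lambda be a complex number with \lambda \ne 1. For any integer k, nonnegative integers n and r, B_n^{(k)}(x) = \frac{1}{(1-\lambda)^r} \sum_{m=0}^{n} \left\{ \binom{n}{m} \sum_{j=0}^{r} \binom{r}{j} (-\lambda)^{r-j} B_{n-m}^{(k)}(j) \right\} H_m^{(r)}(x|\lambda), where H_m^{(r)}(x|\lambda) are the Frobenius-Euler polynomials of order r. -/

import Mathlib

open PowerSeries Finset Nat

/-- The formal power series `e^{-t}`. -/
noncomputable def expNeg : PowerSeries ℂ := PowerSeries.rescale (-1) (PowerSeries.exp ℂ)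

/-- The generating function `Li_k(1-e^{-t})/(1-e^{-t}) = ∑_{m≥0} (1-e^{-t})^m/(m+1)^k`,
given coefficientwise (the sum truncates since `(1-e^{-t})^m` has order `≥ m`). -/
noncomputable def polyBernoulliGF (k : ℤ) : PowerSeries ℂ :=
  PowerSeries.mk fun n => ∑ m ∈ Finset.range (n + 1),
    (((m : ℂ) + 1) ^ k)⁻¹ * PowerSeries.coeff n ((1 - expNeg) ^ m)

/-- The poly-Bernoulli polynomial `B_n^{(k)}(x)`, defined by
`Li_k(1-e^{-t})/(1-e^{-t}) · e^{xt} = ∑ B_n^{(k)}(x) tⁿ/n!`. -/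
noncomputable def polyBernoulli (k : ℤ) (n : ℕ) (x : ℂ) : ℂ :=
  (n ! : ℂ) * PowerSeries.coeff n
    (polyBernoulliGF k * PowerSeries.mk fun j => x ^ j / (j ! : ℂ))

/-- Stirling numbers of the second kind, via `(e^t-1)^m = m! ∑_{l} S₂(l,m) t^l/l!`. -/
noncomputable def stirling2 (l m : ℕ) : ℂ :=
  (l ! : ℂ) / (m ! : ℂ) * PowerSeries.coeff l ((PowerSeries.exp ℂ - 1) ^ m)

/-- Bernoulli polynomials of order `r`: `(t/(e^t-1))^r e^{xt} = ∑ 𝔹_n^{(r)}(x) tⁿ/n!`,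
using that `(e^t-1)/t = ∑ tʲ/(j+1)!` is invertible. -/
noncomputable def bernoulliHigher (r n : ℕ) (x : ℂ) : ℂ :=
  (n ! : ℂ) * PowerSeries.coeff n
    (((PowerSeries.mk fun j => (1 : ℂ) / ((j + 1)! : ℂ))⁻¹) ^ r *
      PowerSeries.mk fun j => x ^ j / (j ! : ℂ))

/-- Euler polynomials of order `r`: `(2/(e^t+1))^r e^{xt} = ∑ E_n^{(r)}(x) tⁿ/n!`. -/
noncomputable def eulerHigher (r n : ℕ) (x : ℂ) : ℂ :=
  (n ! : ℂ) * PowerSeries.coeff n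
    ((((1 + PowerSeries.exp ℂ) * PowerSeries.C (1 / 2))⁻¹) ^ r *
      PowerSeries.mk fun j => x ^ j / (j ! : ℂ))

/-- Frobenius-Euler polynomials of order `r`:
`((1-λ)/(e^t-λ))^r e^{xt} = ∑ H_n^{(r)}(x|λ) tⁿ/n!`. -/
noncomputable def frobeniusEuler (lam : ℂ) (r n : ℕ) (x : ℂ) : ℂ :=
  (n ! : ℂ) * PowerSeries.coeff n
    ((((PowerSeries.exp ℂ - PowerSeries.C lam) * PowerSeries.C (1 - lam)⁻¹)⁻¹) ^ r *
      PowerSeries.mk fun j => x ^ j / (j ! : ℂ))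

/-!
Multiplying the generating function of `B_n^{(k)}(x)` by `1 = ((e^t-λ)/(1-λ))^r ((1-λ)/(e^t-λ))^r`
splits it into `(1-λ)^{-r} (e^t-λ)^r Li_k(1-e^{-t})/(1-e^{-t})` times the generating function of
`H_m^{(r)}(x|λ)`. Expanding `(e^t-λ)^r` binomially turns the first factor into
`∑_j C(r,j) (-λ)^{r-j} Li_k(1-e^{-t})/(1-e^{-t}) e^{jt}`, the generating function of
`∑_j C(r,j) (-λ)^{r-j} B_n^{(k)}(j)`, and the binomial convolution of exponential generating
functions gives the formula.
-/

lemma mk_pow_div_factorial_eq_rescale_exp {K : Type*} [Field K] [CharZero K] (x : K) :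
    (PowerSeries.mk fun j => x ^ j / (j ! : K)) = rescale x (exp K) := by
  ext n
  simp [coeff_rescale, coeff_exp, div_eq_mul_inv]

lemma factorial_mul_coeff_mul {R : Type*} [CommSemiring R] (f g : R⟦X⟧) (n : ℕ) :
    (n ! : R) * coeff n (f * g) = ∑ m ∈ range (n + 1),
      (n.choose m : R) * ((n - m)! * coeff (n - m) f) * (m ! * coeff m g) := by
  rw [mul_comm f, coeff_mul, Finset.Nat.sum_antidiagonal_eq_sum_range_succ
    (fun m l => coeff m g * coeff l f), Finset.mul_sum]
  refine Finset.sum_congr rfl fun m hm => ?_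
  have hfact : (n.choose m : R) * m ! * (n - m)! = n ! := by
    rw [← Nat.cast_mul, ← Nat.cast_mul,
      Nat.choose_mul_factorial_mul_factorial (Nat.lt_succ_iff.mp (mem_range.mp hm))]
  rw [← hfact]
  ring

lemma exp_sub_C_pow {A : Type*} [CommRing A] [Algebra ℚ A] (a : A) (r : ℕ) :
    (exp A - C a) ^ r =
      ∑ j ∈ range (r + 1), C ((r.choose j : A) * (-a) ^ (r - j)) * rescale (j : A) (exp A) := by
  rw [sub_eq_add_neg, ← map_neg, add_pow]
  refine Finset.sum_congr rfl fun j _ => ?_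
  rw [exp_pow_eq_rescale_exp, map_mul, map_pow, map_natCast]
  ring

lemma polyBernoulli_eq_factorial_mul_coeff (k : ℤ) (n : ℕ) (x : ℂ) :
    polyBernoulli k n x = n ! * coeff n (polyBernoulliGF k * rescale x (exp ℂ)) := by
  rw [polyBernoulli, mk_pow_div_factorial_eq_rescale_exp]

lemma factorial_mul_coeff_exp_sub_C_pow_mul_polyBernoulliGF (lam : ℂ) (k : ℤ) (n r : ℕ) :
    (n ! : ℂ) * coeff n ((exp ℂ - C lam) ^ r * polyBernoulliGF k) =
      ∑ j ∈ range (r + 1), (r.choose j : ℂ) * (-lam) ^ (r - j) * polyBernoulli k n j := by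
  rw [exp_sub_C_pow, Finset.sum_mul, map_sum, Finset.mul_sum]
  refine Finset.sum_congr rfl fun j _ => ?_
  rw [polyBernoulli_eq_factorial_mul_coeff, mul_assoc, coeff_C_mul, mul_comm (rescale _ _)]
  ring

theorem polyBernoulli_eq_sum_frobeniusEuler (lam : ℂ) (hlam : lam ≠ 1) (k : ℤ) (n r : ℕ)
    (x : ℂ) :
    polyBernoulli k n x =
      (1 / (1 - lam) ^ r) * ∑ m ∈ Finset.range (n + 1),
        ((n.choose m : ℂ) * ∑ j ∈ Finset.range (r + 1),
          (r.choose j : ℂ) * (-lam) ^ (r - j) * polyBernoulli k (n - m) j) *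
          frobeniusEuler lam r m x := by
  set U : ℂ⟦X⟧ := (exp ℂ - C lam) * C (1 - lam)⁻¹
  have hU : U ^ r * U⁻¹ ^ r = 1 := by
    rw [← mul_pow, PowerSeries.mul_inv_cancel U (by simp [U, sub_ne_zero.mpr hlam.symm]), one_pow]
  have hsplit : polyBernoulliGF k * rescale x (exp ℂ) =
      C ((1 - lam) ^ r)⁻¹ * ((exp ℂ - C lam) ^ r * polyBernoulliGF k) *
        (U⁻¹ ^ r * rescale x (exp ℂ)) := by
    calc polyBernoulliGF k * rescale x (exp ℂ)
        = polyBernoulliGF k * rescale x (exp ℂ) * (U ^ r * U⁻¹ ^ r) := by rw [hU, mul_one]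
      _ = _ := by simp only [U, mul_pow, ← map_pow, inv_pow]; ring
  rw [polyBernoulli_eq_factorial_mul_coeff, hsplit, mul_assoc, coeff_C_mul, mul_left_comm,
    factorial_mul_coeff_mul, one_div]
  simp only [factorial_mul_coeff_exp_sub_C_pow_mul_polyBernoulliGF, frobeniusEuler,
    mk_pow_div_factorial_eq_rescale_exp]
  rfl
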